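/- Let Σ ⊆ {T, B, 4, D} with 4 ∈ Σ. For every KΣ-consistent α ∈ C_{h+1,n} there is exactly one KΣ-consistent formula α′ ∈ C_{h,n} such that ⊢_{KΣ} α→α′. -/

import Mathlib

namespace ModalSOA

/-- Modal formulas: propositional variables, propositional constants, ⊥, →, □. -/
inductive Formula : Type
  | var : ℕ → Formula
  | const : ℕ → Formula
  | bot : Formula
  | imp : Formula → Formula → Formula
  | box : Formula → Formula
deriving DecidableEq

namespace Formula

/-- ¬φ := φ → ⊥ -/
def neg (φ : Formula) : Formula := φ.imp bot

/-- ⊤ := ¬⊥ -/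
def top : Formula := bot.neg

/-- ◇φ := ¬□¬φ -/
def dia (φ : Formula) : Formula := φ.neg.box.neg

/-- φ ∧ ψ := ¬(φ → ¬ψ) -/
def and (φ ψ : Formula) : Formula := (φ.imp ψ.neg).neg

/-- φ ∨ ψ := ¬φ → ψ -/
def or (φ ψ : Formula) : Formula := φ.neg.imp ψ

/-- Uniform substitution: substitute formulas for propositional variables,
    leaving propositional constants fixed. -/
def subst (σ : ℕ → Formula) : Formula → Formula
  | var n => σ n
  | const n => const n
  | bot => bot
  | imp φ ψ => imp (φ.subst σ) (ψ.subst σ)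
  | box φ => box (φ.subst σ)

end Formula

open Formula

/-- The propositional variable p. -/
def pv : Formula := .var 0
/-- The propositional variable q. -/
def qv : Formula := .var 1
/-- The propositional variable r. -/
def rv : Formula := .var 2

/-- The seven extra modal axioms considered: T, B, 4, 5, D, .2, L. -/
inductive ModalAxiom : Type
  | T | B | four | five | D | dot2 | L
deriving DecidableEq

/-- The modal formula corresponding to each axiom name. -/
def ModalAxiom.fml : ModalAxiom → Formula
  | .T => pv.box.imp pv                       -- □p → p
  | .B => pv.imp pv.dia.box                   -- p → □◇p
  | .four => pv.box.imp pv.box.box            -- □p → □□p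
  | .five => pv.dia.imp pv.dia.box            -- ◇p → □◇p
  | .D => pv.box.imp pv.dia                   -- □p → ◇p
  | .dot2 => pv.box.dia.imp pv.dia.box        -- ◇□p → □◇p
  | .L => (pv.box.imp pv).box.imp pv.box      -- □(□p→p) → □p

/-- Hilbert-style provability for the normal modal logic with extra axioms `Ax`:
classical propositional axioms, K, members of `Ax`, modus ponens, necessitation,
and uniform substitution. -/
inductive Prv (Ax : Set Formula) : Formula → Prop
  | ax1 : Prv Ax (pv.imp (qv.imp pv))
  | ax2 : Prv Ax ((pv.imp (qv.imp rv)).imp ((pv.imp qv).imp (pv.imp rv)))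
  | ax3 : Prv Ax ((pv.neg.imp qv.neg).imp (qv.imp pv))
  | axK : Prv Ax ((pv.imp qv).box.imp (pv.box.imp qv.box))
  | extra {φ} : φ ∈ Ax → Prv Ax φ
  | mp {φ ψ} : Prv Ax (φ.imp ψ) → Prv Ax φ → Prv Ax ψ
  | nec {φ} : Prv Ax φ → Prv Ax φ.box
  | subst {φ} (σ : ℕ → Formula) : Prv Ax φ → Prv Ax (φ.subst σ)

/-- The axiom set of the logic KΣ. -/
def KAxioms (Sig : Set ModalAxiom) : Set Formula := ModalAxiom.fml '' Sig

/-- The axiom set of GL = K{L}. -/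
def GLAx : Set Formula := KAxioms {ModalAxiom.L}

/-- Conjunction of a list of formulas (empty conjunction is ⊤). -/
def listConj : List Formula → Formula
  | [] => top
  | [φ] => φ
  | φ :: ψ :: l => φ.and (listConj (ψ :: l))

/-- Disjunction of a list of formulas (empty disjunction is ⊥). -/
def listDisj : List Formula → Formula
  | [] => bot
  | [φ] => φ
  | φ :: ψ :: l => φ.or (listDisj (ψ :: l))

/-- Pbl(Γ, φ): there are ψ₁,…,ψₙ ∈ Γ with ⊢ (ψ₁∧…∧ψₙ) → φ. -/
def Pbl (Ax : Set Formula) (Γ : Set Formula) (φ : Formula) : Prop :=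
  ∃ l : List Formula, (∀ ψ ∈ l, ψ ∈ Γ) ∧ Prv Ax ((listConj l).imp φ)

/-- A formula φ is consistent if ⊬ φ → ⊥. -/
def FmlConsistent (Ax : Set Formula) (φ : Formula) : Prop := ¬ Prv Ax (φ.imp bot)

/-- A set Γ is consistent if ¬Pbl(Γ, ⊥). -/
def SetConsistent (Ax : Set Formula) (Γ : Set Formula) : Prop := ¬ Pbl Ax Γ bot

/-- Γ is maximally consistent: consistent, closed under deduction, and for
every φ, φ ∈ Γ or ¬φ ∈ Γ. -/
def MaxConsistent (Ax : Set Formula) (Γ : Set Formula) : Prop :=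
  SetConsistent Ax Γ ∧ (∀ φ, Pbl Ax Γ φ → φ ∈ Γ) ∧ (∀ φ, φ ∈ Γ ∨ φ.neg ∈ Γ)

/-- Euclidean relation. -/
def Euclidean {W : Type*} (R : W → W → Prop) : Prop := ∀ ⦃x y z⦄, R x y → R x z → R y z

/-- Serial relation. -/
def Serial {W : Type*} (R : W → W → Prop) : Prop := ∀ x, ∃ y, R x y

/-- Directed relation. -/
def Directed {W : Type*} (R : W → W → Prop) : Prop :=
  ∀ ⦃x y z⦄, R x y → R x z → ∃ s, R y s ∧ R z s

/-- No infinite ascending R-sequence. -/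
def NoInfiniteAscent {W : Type*} (R : W → W → Prop) : Prop :=
  ¬ ∃ f : ℕ → W, ∀ n, R (f n) (f (n + 1))

/-- A frame (with relation R) is appropriate to a given modal axiom. -/
def AppropriateTo {W : Type*} (R : W → W → Prop) : ModalAxiom → Prop
  | .T => Reflexive R
  | .B => Symmetric R
  | .four => Transitive R
  | .five => Euclidean R
  | .D => Serial R
  | .dot2 => Directed R
  | .L => Transitive R ∧ NoInfiniteAscent R

/-- A frame is appropriate to Σ if it is appropriate to each member of Σ. -/
def Appropriate {W : Type*} (R : W → W → Prop) (Sig : Set ModalAxiom) : Prop :=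
  ∀ a ∈ Sig, AppropriateTo R a

/-- A valuation on a frame: truth values for all formulas, respecting the
Kripke clauses for ⊥, →, □. -/
structure Valuation {W : Type*} (R : W → W → Prop) where
  val : W → Formula → Bool
  val_bot : ∀ w, val w Formula.bot = false
  val_imp : ∀ w φ ψ, val w (φ.imp ψ) = (!(val w φ) || val w ψ)
  val_box : ∀ w φ, val w φ.box = true ↔ ∀ v, R w v → val v φ = true

/-- F ⊩ φ : every valuation on the frame makes φ true at every world. -/
def FrameForces {W : Type*} (R : W → W → Prop) (φ : Formula) : Prop :=
  ∀ V : Valuation R, ∀ w : W, V.val w φ = true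

/-- Height of a formula. -/
def ht : Formula → ℕ
  | .imp φ ψ => max (ht φ) (ht ψ)
  | .box φ => 1 + ht φ
  | _ => 0

/-- Order of a formula, with respect to the fixed enumeration `atom` of
atomic formulas. -/
def ord : Formula → ℕ
  | .bot => 0
  | .var k => 2 * k + 1
  | .const k => 2 * k + 2
  | .imp φ ψ => max (ord φ) (ord ψ)
  | .box φ => ord φ

/-- A fixed enumeration p₀, p₁, … of the atomic formulas (⊥, variables and
constants), with `ord (atom n) = n`. -/
def atom : ℕ → Formula
  | 0 => .bot
  | n + 1 => if n % 2 = 0 then .var (n / 2) else .const (n / 2)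

/-- φ ∈ L_{h,n}. -/
def InL (h n : ℕ) (φ : Formula) : Prop := ht φ ≤ h ∧ ord φ ≤ n

/-- T̂ for T ⊆ {p₀,…,pₙ}: the conjunction of the atoms in T and the negations
of the remaining atoms among p₀,…,pₙ. -/
def hatT (n : ℕ) (T : List ℕ) : Formula :=
  listConj ((List.range (n + 1)).map (fun i => if i ∈ T then atom i else (atom i).neg))

/-- The canonical formula α_{S,T} = (∧_{ψ∈S} ◇ψ) ∧ □(∨S) ∧ T̂. -/
def canonAlpha (n : ℕ) (S : List Formula) (T : List ℕ) : Formula :=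
  (listConj (S.map dia)).and (((listDisj S).box).and (hatT n T))

/-- The canonical formulas C_{h,n} (as a finite list). -/
def C : ℕ → ℕ → List Formula
  | 0, n => (List.range (n + 1)).sublists.map (hatT n)
  | h + 1, n => (C h n).sublists.flatMap
      (fun S => (List.range (n + 1)).sublists.map (fun T => canonAlpha n S T))

/-- ⊕X := ∨_{α∈X}(α ∧ ∧_{β∈X\{α}} ¬β). -/
def bigOplus (X : List Formula) : Formula :=
  listDisj (X.map (fun α => α.and (listConj ((X.filter (· ≠ α)).map neg))))

/-- The set of subformulas of a formula. -/
def sub : Formula → Finset Formula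
  | .imp φ ψ => insert (Formula.imp φ ψ) (sub φ ∪ sub ψ)
  | .box φ => insert φ.box (sub φ)
  | a => {a}

/-- (W, R, V) is a weak Kripke model of φ: W nonempty and V satisfies the
valuation clauses for ⊥, →, □ on the subformulas of φ. -/
structure IsWeakKripkeModel (φ : Formula) {W : Type*} (R : W → W → Prop)
    (V : W → Formula → Bool) : Prop where
  nonempty : Nonempty W
  val_bot : ∀ w, Formula.bot ∈ sub φ → V w Formula.bot = false
  val_imp : ∀ w ψ θ, ψ.imp θ ∈ sub φ → V w (ψ.imp θ) = (!(V w ψ) || V w θ)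
  val_box : ∀ w ψ, ψ.box ∈ sub φ → (V w ψ.box = true ↔ ∀ v, R w v → V v ψ = true)

/-- W̃ : the KΣ-consistent α ∈ C_{h+1,n} with ⊢ α → φ. -/
def tildeW (Ax : Set Formula) (φ : Formula) (h n : ℕ) : Set Formula :=
  {α | α ∈ C (h + 1) n ∧ FmlConsistent Ax α ∧ Prv Ax (α.imp φ)}

/-- α →c β iff α ∧ ◇β is consistent. -/
def relC (Ax : Set Formula) (α β : Formula) : Prop := FmlConsistent Ax (α.and β.dia)

/-- Ṽ(α, ψ) = 1 iff ⊢ α → ψ. -/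
noncomputable def tildeV (Ax : Set Formula) (α ψ : Formula) : Bool :=
  @decide _ (Classical.propDecidable (Prv Ax (α.imp ψ)))

-- α′ : the unique consistent member of C_{h,n} provably implied by α.
open Classical in
noncomputable def prime (Ax : Set Formula) (h n : ℕ) (α : Formula) : Formula :=
  if hx : ∃ α', α' ∈ C h n ∧ FmlConsistent Ax α' ∧ Prv Ax (α.imp α') then hx.choose
  else Formula.bot

/-- α →m β iff ⊢ α → ◇β′ and every ξ ∈ C_{h,n} with ⊢ β → ◇ξ satisfies ⊢ α → ◇ξ. -/
def relM (Ax : Set Formula) (h n : ℕ) (α β : Formula) : Prop :=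
  Prv Ax (α.imp (prime Ax h n β).dia) ∧
  ∀ ξ ∈ C h n, Prv Ax (β.imp ξ.dia) → Prv Ax (α.imp ξ.dia)

/-- α →d β (for GL) iff α →m β and some γ ∈ C_{h,n} has ⊢ α → ◇γ and ⊢ β → □¬γ. -/
def relD (h n : ℕ) (α β : Formula) : Prop :=
  relM GLAx h n α β ∧
  ∃ γ ∈ C h n, Prv GLAx (α.imp γ.dia) ∧ Prv GLAx (β.imp γ.neg.box)

/-!
Distinct members of `C h n` are provably incompatible. At height 0 they disagree on some atom.
At height `h + 1`, either their `T̂` parts disagree, or some `ψ` lies in the `S` of one but not in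
the `S` of the other (sublists of `C h n` with the same members coincide because `C h n` has no
repetitions); then the first proves `◇ψ`, while the second proves `□(∨S)` and hence, by
incompatibility at height `h`, `□¬ψ`. So `α` implies at most one consistent member of `C h n`.
For existence, `α_{S,T}` implies `α_{S',T}`, where `S'` collects the members of `C h n` implied by
some member of `S`; by induction every member of `S` implies one.
-/

theorem _root_.List.Nodup.sublist_ext {α : Type*} {s₁ s₂ l : List α} (hl : l.Nodup)
    (h₁ : s₁.Sublist l) (h₂ : s₂.Sublist l) (h : ∀ x, x ∈ s₁ ↔ x ∈ s₂) : s₁ = s₂ := by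
  classical
  have key : ∀ {s}, s.Sublist l → s = l.filter (· ∈ s) := by
    intro s hs
    clear h h₁ h₂
    induction hs with
    | slnil => rfl
    | @cons l₁ l₂ a hs ih =>
      obtain ⟨ha, hl⟩ := List.nodup_cons.mp hl
      rw [List.filter_cons_of_neg (by simpa using fun h => ha (hs.subset h)), ← ih hl]
    | @cons_cons l₁ l₂ a hs ih =>
      obtain ⟨ha, hl⟩ := List.nodup_cons.mp hl
      rw [List.filter_cons_of_pos (by simp), ih hl]
      congr 1
      exact List.filter_congr fun x hx => by simp [ne_of_mem_of_not_mem hx ha, hx]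
  rw [key h₁, key h₂]
  simp only [h]

namespace Prv

variable {Ax : Set Formula} {φ ψ χ : Formula}

theorem imply₁ (φ ψ : Formula) : Prv Ax (φ.imp (ψ.imp φ)) := by
  simpa [Formula.subst, pv, qv] using Prv.subst (Ax := Ax) (fun k => if k = 0 then φ else ψ) ax1

theorem imply₂ (φ ψ χ : Formula) :
    Prv Ax ((φ.imp (ψ.imp χ)).imp ((φ.imp ψ).imp (φ.imp χ))) := by
  simpa [Formula.subst, pv, qv, rv] using
    Prv.subst (Ax := Ax) (fun k => if k = 0 then φ else if k = 1 then ψ else χ) ax2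

theorem contra (φ ψ : Formula) : Prv Ax ((φ.neg.imp ψ.neg).imp (ψ.imp φ)) := by
  simpa [Formula.subst, pv, qv, Formula.neg] using
    Prv.subst (Ax := Ax) (fun k => if k = 0 then φ else ψ) ax3

theorem boxK (φ ψ : Formula) : Prv Ax ((φ.imp ψ).box.imp (φ.box.imp ψ.box)) := by
  simpa [Formula.subst, pv, qv] using Prv.subst (Ax := Ax) (fun k => if k = 0 then φ else ψ) axK

theorem imp_mp (h₁ : Prv Ax (φ.imp (ψ.imp χ))) (h₂ : Prv Ax (φ.imp ψ)) : Prv Ax (φ.imp χ) :=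
  ((imply₂ φ ψ χ).mp h₁).mp h₂

theorem imp_self : Prv Ax (φ.imp φ) := imp_mp (imply₁ φ (φ.imp φ)) (imply₁ φ φ)

theorem imp_of (h : Prv Ax ψ) : Prv Ax (φ.imp ψ) := (imply₁ ψ φ).mp h

theorem trans (h₁ : Prv Ax (φ.imp ψ)) (h₂ : Prv Ax (ψ.imp χ)) : Prv Ax (φ.imp χ) :=
  imp_mp (imp_of h₂) h₁

theorem imp_swap (h : Prv Ax (φ.imp (ψ.imp χ))) : Prv Ax (ψ.imp (φ.imp χ)) :=
  (imply₁ ψ φ).trans ((imply₂ φ ψ χ).mp h)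

theorem imp_imp_left (h : Prv Ax (φ.imp ψ)) : Prv Ax ((ψ.imp χ).imp (φ.imp χ)) :=
  (imply₁ (ψ.imp χ) φ).trans ((imp_swap (imply₂ φ ψ χ)).mp h)

theorem imp_imp_right (h : Prv Ax (ψ.imp χ)) : Prv Ax ((φ.imp ψ).imp (φ.imp χ)) :=
  (imply₂ φ ψ χ).mp (imp_of h)

theorem imp_neg_neg : Prv Ax (φ.imp φ.neg.neg) := imp_swap (imp_self (φ := φ.neg))

theorem bot_imp : Prv Ax (bot.imp φ) := (contra φ bot).mp (imp_of imp_self)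

theorem and_imp_left : Prv Ax ((φ.and ψ).imp φ) :=
  (contra φ (φ.imp ψ.neg).neg).mp ((imp_imp_right bot_imp).trans imp_neg_neg)

theorem and_imp_right : Prv Ax ((φ.and ψ).imp ψ) :=
  (contra ψ (φ.imp ψ.neg).neg).mp ((imply₁ ψ.neg φ).trans imp_neg_neg)

theorem imp_and (h₁ : Prv Ax (χ.imp φ)) (h₂ : Prv Ax (χ.imp ψ)) : Prv Ax (χ.imp (φ.and ψ)) :=
  imp_swap ((imp_imp_left h₁).trans ((imp_swap (imply₂ χ ψ bot)).mp h₂))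

theorem imp_or_left : Prv Ax (φ.imp (φ.or ψ)) := imp_swap (imp_imp_right bot_imp)

theorem imp_or_right : Prv Ax (ψ.imp (φ.or ψ)) := imply₁ ψ φ.neg

theorem or_imp (h₁ : Prv Ax (φ.imp χ)) (h₂ : Prv Ax (ψ.imp χ)) : Prv Ax ((φ.or ψ).imp χ) := by
  have hcontra : Prv Ax ((φ.neg.imp χ).imp (χ.neg.imp χ)) := imp_imp_left (imp_imp_left h₁)
  have hcollapse : Prv Ax ((χ.neg.imp χ).imp χ.neg.neg) := (imply₂ χ.neg χ bot).mp imp_self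
  exact (imp_imp_right h₂).trans ((contra χ _).mp (imp_swap (hcontra.trans hcollapse)))

theorem box_mono (h : Prv Ax (φ.imp ψ)) : Prv Ax (φ.box.imp ψ.box) := (boxK φ ψ).mp h.nec

theorem dia_mono (h : Prv Ax (φ.imp ψ)) : Prv Ax (φ.dia.imp ψ.dia) :=
  imp_imp_left (box_mono (imp_imp_left h))

theorem imp_neg_of_imp_neg_of_imp (h₁ : Prv Ax (φ.imp χ.neg)) (h₂ : Prv Ax (ψ.imp χ)) :
    Prv Ax (φ.imp ψ.neg) :=
  h₁.trans (imp_imp_left h₂)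

theorem imp_neg_comm (h : Prv Ax (φ.imp ψ.neg)) : Prv Ax (ψ.imp φ.neg) := imp_swap h

theorem listConj_imp_of_mem {l : List Formula} (hφ : φ ∈ l) : Prv Ax ((listConj l).imp φ) := by
  induction l using listConj.induct with
  | case1 => simp at hφ
  | case2 a => rw [List.mem_singleton.mp hφ]; exact imp_self
  | case3 a b l ih =>
    rcases List.mem_cons.mp hφ with rfl | hφ
    · exact and_imp_left
    · exact and_imp_right.trans (ih hφ)

theorem imp_listConj {l : List Formula} (h : ∀ ψ ∈ l, Prv Ax (φ.imp ψ)) :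
    Prv Ax (φ.imp (listConj l)) := by
  induction l using listConj.induct with
  | case1 => exact imp_of imp_self
  | case2 a => exact h a (List.mem_singleton_self a)
  | case3 a b l ih =>
    exact imp_and (h a List.mem_cons_self) (ih fun ψ hψ => h ψ (List.mem_cons_of_mem a hψ))

theorem imp_listDisj_of_mem {l : List Formula} (hφ : φ ∈ l) : Prv Ax (φ.imp (listDisj l)) := by
  induction l using listDisj.induct with
  | case1 => simp at hφ
  | case2 a => rw [List.mem_singleton.mp hφ]; exact imp_self
  | case3 a b l ih =>
    rcases List.mem_cons.mp hφ with rfl | hφ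
    · exact imp_or_left
    · exact (ih hφ).trans imp_or_right

theorem listDisj_imp {l : List Formula} (h : ∀ ψ ∈ l, Prv Ax (ψ.imp χ)) :
    Prv Ax ((listDisj l).imp χ) := by
  induction l using listDisj.induct with
  | case1 => exact bot_imp
  | case2 a => exact h a (List.mem_singleton_self a)
  | case3 a b l ih =>
    exact or_imp (h a List.mem_cons_self) (ih fun ψ hψ => h ψ (List.mem_cons_of_mem a hψ))

end Prv

theorem FmlConsistent.of_imp {Ax : Set Formula} {φ ψ : Formula} (hφ : FmlConsistent Ax φ)
    (h : Prv Ax (φ.imp ψ)) : FmlConsistent Ax ψ :=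
  fun hψ => hφ (h.trans hψ)

section Canonical

variable {Ax : Set Formula} {n i : ℕ} {ψ : Formula} {S S₁ S₂ : List Formula} {T T₁ T₂ : List ℕ}

theorem canonAlpha_imp_dia (hψ : ψ ∈ S) : Prv Ax ((canonAlpha n S T).imp ψ.dia) :=
  Prv.and_imp_left.trans (Prv.listConj_imp_of_mem (List.mem_map_of_mem hψ))

theorem canonAlpha_imp_box : Prv Ax ((canonAlpha n S T).imp (listDisj S).box) :=
  Prv.and_imp_right.trans Prv.and_imp_left

theorem canonAlpha_imp_hatT : Prv Ax ((canonAlpha n S T).imp (hatT n T)) :=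
  Prv.and_imp_right.trans Prv.and_imp_right

theorem canonAlpha_imp_canonAlpha (hdia : ∀ ξ ∈ S₂, ∃ ψ ∈ S₁, Prv Ax (ψ.imp ξ))
    (hbox : ∀ ψ ∈ S₁, ∃ ξ ∈ S₂, Prv Ax (ψ.imp ξ)) :
    Prv Ax ((canonAlpha n S₁ T).imp (canonAlpha n S₂ T)) := by
  refine Prv.imp_and (Prv.imp_listConj fun φ hφ => ?_) (Prv.imp_and ?_ canonAlpha_imp_hatT)
  · obtain ⟨ξ, hξ, rfl⟩ := List.mem_map.mp hφ
    obtain ⟨ψ, hψ, hψξ⟩ := hdia ξ hξ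
    exact (canonAlpha_imp_dia hψ).trans (Prv.dia_mono hψξ)
  · refine canonAlpha_imp_box.trans (Prv.box_mono (Prv.listDisj_imp fun ψ hψ => ?_))
    obtain ⟨ξ, hξ, hψξ⟩ := hbox ψ hψ
    exact hψξ.trans (Prv.imp_listDisj_of_mem hξ)

theorem hatT_imp_atom (hi : i ∈ List.range (n + 1)) (hT : i ∈ T) :
    Prv Ax ((hatT n T).imp (atom i)) := by
  simpa [hatT, hT] using Prv.listConj_imp_of_mem (Ax := Ax) (List.mem_map_of_mem
    (f := fun i => if i ∈ T then atom i else (atom i).neg) hi)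

theorem hatT_imp_neg_atom (hi : i ∈ List.range (n + 1)) (hT : i ∉ T) :
    Prv Ax ((hatT n T).imp (atom i).neg) := by
  simpa [hatT, hT] using Prv.listConj_imp_of_mem (Ax := Ax) (List.mem_map_of_mem
    (f := fun i => if i ∈ T then atom i else (atom i).neg) hi)

theorem hatT_imp_neg_hatT_of_not_mem_of_mem (hi : i ∈ List.range (n + 1)) (h₁ : i ∉ T₁)
    (h₂ : i ∈ T₂) : Prv Ax ((hatT n T₁).imp (hatT n T₂).neg) :=
  Prv.imp_neg_of_imp_neg_of_imp (hatT_imp_neg_atom hi h₁) (hatT_imp_atom hi h₂)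

theorem hatT_imp_neg_hatT (hT₁ : T₁.Sublist (List.range (n + 1)))
    (hT₂ : T₂.Sublist (List.range (n + 1))) (hne : T₁ ≠ T₂) :
    Prv Ax ((hatT n T₁).imp (hatT n T₂).neg) := by
  obtain ⟨i, hi⟩ : ∃ i, ¬(i ∈ T₁ ↔ i ∈ T₂) := by
    by_contra! h
    exact hne (List.nodup_range.sublist_ext hT₁ hT₂ h)
  by_cases h₁ : i ∈ T₁
  · exact Prv.imp_neg_comm
      (hatT_imp_neg_hatT_of_not_mem_of_mem (hT₁.subset h₁) (by tauto) h₁)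
  · exact hatT_imp_neg_hatT_of_not_mem_of_mem (hT₂.subset (by tauto)) h₁ (by tauto)

theorem canonAlpha_imp_neg_of_hatT (h : Prv Ax ((hatT n T₁).imp (hatT n T₂).neg)) :
    Prv Ax ((canonAlpha n S₁ T₁).imp (canonAlpha n S₂ T₂).neg) :=
  Prv.imp_neg_of_imp_neg_of_imp (canonAlpha_imp_hatT.trans h) canonAlpha_imp_hatT

theorem canonAlpha_imp_neg_of_not_mem_of_mem (h₁ : ∀ χ ∈ S₁, Prv Ax (χ.imp ψ.neg))
    (h₂ : ψ ∈ S₂) : Prv Ax ((canonAlpha n S₁ T₁).imp (canonAlpha n S₂ T₂).neg) :=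
  Prv.imp_neg_of_imp_neg_of_imp
    (canonAlpha_imp_box.trans ((Prv.box_mono (Prv.listDisj_imp h₁)).trans Prv.imp_neg_neg))
    (canonAlpha_imp_dia h₂)

end Canonical

theorem Formula.and_inj {φ ψ φ' ψ' : Formula} : φ.and ψ = φ'.and ψ' ↔ φ = φ' ∧ ψ = ψ' := by
  simp [Formula.and, Formula.neg]

theorem atom_ne_imp (i : ℕ) (φ ψ : Formula) : atom i ≠ φ.imp ψ := by
  unfold atom
  split
  · simp
  · split <;> simp

theorem listConj_map_inj_left {β : Type*} {f g : β → Formula} {l : List β} :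
    listConj (l.map f) = listConj (l.map g) ↔ ∀ x ∈ l, f x = g x := by
  refine ⟨fun h => ?_, fun h => by rw [List.map_congr_left h]⟩
  induction l with
  | nil => simp
  | cons a l ih =>
    cases l with
    | nil => simpa [listConj] using h
    | cons b l =>
      obtain ⟨hab, h⟩ := Formula.and_inj.mp h
      exact List.forall_mem_cons.mpr ⟨hab, ih h⟩

theorem eq_of_listConj_map_dia_eq :
    ∀ {S₁ S₂ : List Formula}, listConj (S₁.map dia) = listConj (S₂.map dia) → S₁ = S₂
  | [], [], _ => rfl
  | [a], [b], h => by simpa [listConj, dia, Formula.neg] using h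
  | a :: b :: S₁, c :: d :: S₂, h => by
    obtain ⟨hac, h⟩ := Formula.and_inj.mp h
    simp only [dia, Formula.neg, Formula.imp.injEq, Formula.box.injEq, and_true] at hac
    rw [hac, eq_of_listConj_map_dia_eq (S₁ := b :: S₁) (S₂ := d :: S₂) h]
  | [], [_], h | [], _ :: _ :: _, h | [_], [], h | [_], _ :: _ :: _, h
  | _ :: _ :: _, [], h | _ :: _ :: _, [_], h => by
    simp [listConj, top, dia, Formula.and, Formula.neg] at h

theorem eq_of_hatT_eq {n : ℕ} {T₁ T₂ : List ℕ} (hT₁ : T₁.Sublist (List.range (n + 1)))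
    (hT₂ : T₂.Sublist (List.range (n + 1))) (h : hatT n T₁ = hatT n T₂) : T₁ = T₂ := by
  refine List.nodup_range.sublist_ext hT₁ hT₂ fun i => ?_
  have key := listConj_map_inj_left.mp h
  constructor <;> intro hi
  · by_contra hi'
    exact atom_ne_imp i _ _ (by simpa [Formula.neg, hi, hi'] using key i (hT₁.subset hi))
  · by_contra hi'
    exact atom_ne_imp i _ _ (by simpa [Formula.neg, hi, hi'] using (key i (hT₂.subset hi)).symm)

theorem mem_C_zero {n : ℕ} {α : Formula} :
    α ∈ C 0 n ↔ ∃ T, T.Sublist (List.range (n + 1)) ∧ α = hatT n T := by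
  simp [C, eq_comm]

theorem mem_C_succ {h n : ℕ} {α : Formula} :
    α ∈ C (h + 1) n ↔ ∃ S, S.Sublist (C h n) ∧ ∃ T, T.Sublist (List.range (n + 1)) ∧
      α = canonAlpha n S T := by
  simp [C, eq_comm]

theorem nodup_C (h n : ℕ) : (C h n).Nodup := by
  induction h with
  | zero =>
    refine (List.nodup_sublists.mpr List.nodup_range).map_on fun T₁ hT₁ T₂ hT₂ => ?_
    exact eq_of_hatT_eq (List.mem_sublists.mp hT₁) (List.mem_sublists.mp hT₂)
  | succ h ih =>
    refine List.nodup_flatMap.mpr ⟨fun S _ => ?_, ?_⟩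
    · refine (List.nodup_sublists.mpr List.nodup_range).map_on fun T₁ hT₁ T₂ hT₂ hT => ?_
      exact eq_of_hatT_eq (List.mem_sublists.mp hT₁) (List.mem_sublists.mp hT₂)
        (Formula.and_inj.mp (Formula.and_inj.mp hT).2).2
    · refine (List.nodup_sublists.mpr ih).imp fun hne α hα₁ hα₂ => hne ?_
      obtain ⟨T₁, -, rfl⟩ := List.mem_map.mp hα₁
      obtain ⟨T₂, -, hT⟩ := List.mem_map.mp hα₂
      exact (eq_of_listConj_map_dia_eq (Formula.and_inj.mp hT).1).symm

theorem Prv.imp_neg_of_mem_C_of_ne {Ax : Set Formula} {h n : ℕ} {β γ : Formula}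
    (hβ : β ∈ C h n) (hγ : γ ∈ C h n) (hne : β ≠ γ) : Prv Ax (β.imp γ.neg) := by
  induction h generalizing β γ with
  | zero =>
    obtain ⟨T₁, hT₁, rfl⟩ := mem_C_zero.mp hβ
    obtain ⟨T₂, hT₂, rfl⟩ := mem_C_zero.mp hγ
    exact hatT_imp_neg_hatT hT₁ hT₂ fun hT => hne (hT ▸ rfl)
  | succ h ih =>
    obtain ⟨S₁, hS₁, T₁, hT₁, rfl⟩ := mem_C_succ.mp hβ
    obtain ⟨S₂, hS₂, T₂, hT₂, rfl⟩ := mem_C_succ.mp hγ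
    by_cases hS : S₁ = S₂
    · subst hS
      exact canonAlpha_imp_neg_of_hatT (hatT_imp_neg_hatT hT₁ hT₂ fun hT => hne (hT ▸ rfl))
    obtain ⟨ψ, hψ⟩ : ∃ ψ, ¬(ψ ∈ S₁ ↔ ψ ∈ S₂) := by
      by_contra! hmem
      exact hS ((nodup_C h n).sublist_ext hS₁ hS₂ hmem)
    by_cases hψ₁ : ψ ∈ S₁
    · have hψ₂ : ψ ∉ S₂ := by tauto
      refine Prv.imp_neg_comm (canonAlpha_imp_neg_of_not_mem_of_mem (fun χ hχ => ?_) hψ₁)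
      exact ih (hS₂.subset hχ) (hS₁.subset hψ₁) (ne_of_mem_of_not_mem hχ hψ₂)
    · have hψ₂ : ψ ∈ S₂ := by tauto
      refine canonAlpha_imp_neg_of_not_mem_of_mem (fun χ hχ => ?_) hψ₂
      exact ih (hS₁.subset hχ) (hS₂.subset hψ₂) (ne_of_mem_of_not_mem hχ hψ₁)

theorem exists_mem_C_imp_of_mem_C_succ {Ax : Set Formula} {h n : ℕ} {α : Formula}
    (hα : α ∈ C (h + 1) n) : ∃ α' ∈ C h n, Prv Ax (α.imp α') := by
  induction h generalizing α with
  | zero =>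
    obtain ⟨S, -, T, hT, rfl⟩ := mem_C_succ.mp hα
    exact ⟨hatT n T, mem_C_zero.mpr ⟨T, hT, rfl⟩, canonAlpha_imp_hatT⟩
  | succ h ih =>
    obtain ⟨S, hS, T, hT, rfl⟩ := mem_C_succ.mp hα
    classical
    let S' := (C h n).filter fun ξ => ∃ ψ ∈ S, Prv Ax (ψ.imp ξ)
    have mem_S' : ∀ ξ, ξ ∈ S' ↔ ξ ∈ C h n ∧ ∃ ψ ∈ S, Prv Ax (ψ.imp ξ) := by simp [S']
    refine ⟨canonAlpha n S' T, mem_C_succ.mpr ⟨S', List.filter_sublist, T, hT, rfl⟩, ?_⟩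
    refine canonAlpha_imp_canonAlpha (fun ξ hξ => ((mem_S' ξ).mp hξ).2) fun ψ hψ => ?_
    obtain ⟨ψ', hψ', hψψ'⟩ := ih (hS.subset hψ)
    exact ⟨ψ', (mem_S' ψ').mpr ⟨hψ', ψ, hψ, hψψ'⟩, hψψ'⟩

theorem prime_unique_general (Sig : Set ModalAxiom)
    (h n : ℕ) (α : Formula) (hα : α ∈ C (h + 1) n)
    (hcons : FmlConsistent (KAxioms Sig) α) :
    ∃! α' : Formula,
      α' ∈ C h n ∧ FmlConsistent (KAxioms Sig) α' ∧ Prv (KAxioms Sig) (α.imp α') := by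
  obtain ⟨α', hα', himp⟩ := exists_mem_C_imp_of_mem_C_succ hα
  refine ⟨α', ⟨hα', hcons.of_imp himp, himp⟩, fun β ⟨hβ, _, himpβ⟩ => ?_⟩
  by_contra hne
  exact hcons (Prv.imp_mp (himpβ.trans (Prv.imp_neg_of_mem_C_of_ne hβ hα' hne)) himp)

/-- For 4 ∈ Σ ⊆ {T,B,4,D} and KΣ-consistent α ∈ C_{h+1,n}, there
is exactly one KΣ-consistent α′ ∈ C_{h,n} with ⊢ α→α′. -/
theorem prime_unique (Sig : Set ModalAxiom)
    (hSig : Sig ⊆ {ModalAxiom.T, ModalAxiom.B, ModalAxiom.four, ModalAxiom.D})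
    (h4 : ModalAxiom.four ∈ Sig)
    (h n : ℕ) (α : Formula) (hα : α ∈ C (h + 1) n)
    (hcons : FmlConsistent (KAxioms Sig) α) :
    ∃! α' : Formula,
      α' ∈ C h n ∧ FmlConsistent (KAxioms Sig) α' ∧ Prv (KAxioms Sig) (α.imp α') :=
  prime_unique_general Sig h n α hα hcons

end ModalSOA
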